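/- The function u ↦ arcsin(1/u) is convex on the interval (1, ∞). (This is the convexity of the elevation angle θ = (180/π)·arcsin((z_U−H_B)/d_{U,B}) as a function of the ratio d_{U,B}/(z_U−H_B), used in the proof of the channel-gain lower bound.) -/

import Mathlib

/-!
On `[0, 1]` the derivative `1 / √(1 - x²)` of `arcsin` increases, so `arcsin` is convex there; it is
also monotone. Since `u ↦ 1 / u` is convex on `[1, ∞)` with values in `[0, 1]`, the composition
`u ↦ arcsin (1 / u)` is convex there.
-/

open Real Set

theorem convexOn_arcsin_Icc : ConvexOn ℝ (Icc 0 1) arcsin := by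
  refine MonotoneOn.convexOn_of_deriv (convex_Icc 0 1) continuous_arcsin.continuousOn ?_ ?_
  · rw [interior_Icc]
    exact fun x hx ↦ (differentiableAt_arcsin.2 ⟨by linarith [hx.1], hx.2.ne⟩).differentiableWithinAt
  · rw [interior_Icc, deriv_arcsin]
    intro x hx y hy hxy
    have hy' : 0 < 1 - y ^ 2 := by nlinarith [hy.1, hy.2]
    exact one_div_le_one_div_of_le (sqrt_pos.2 hy') (sqrt_le_sqrt (by nlinarith [hx.1]))

theorem convexOn_arcsin_one_div : ConvexOn ℝ (Ici 1) fun u : ℝ ↦ arcsin (1 / u) := by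
  have hone_div : ConvexOn ℝ (Ici 1) fun u : ℝ ↦ 1 / u := by
    simpa using (convexOn_zpow (𝕜 := ℝ) (-1)).subset (Ici_subset_Ioi.2 one_pos) (convex_Ici 1)
  have hcont : ContinuousOn (fun u : ℝ ↦ 1 / u) (Ici 1) :=
    continuousOn_const.div continuousOn_id fun u hu ↦ (zero_lt_one.trans_le hu).ne'
  have himage : (fun u : ℝ ↦ 1 / u) '' Ici 1 ⊆ Icc 0 1 := by
    rintro _ ⟨u, hu, rfl⟩
    exact ⟨one_div_nonneg.2 (zero_le_one.trans hu), div_le_one_of_le₀ hu (zero_le_one.trans hu)⟩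
  exact (convexOn_arcsin_Icc.subset himage
    (Real.convex_iff_isPreconnected.2 (isPreconnected_Ici.image _ hcont))).comp hone_div
    (monotone_arcsin.monotoneOn _)

/-- The function u ↦ arcsin(1/u) is convex on (1, ∞). -/
theorem arcsin_inv_convexOn :
    ConvexOn ℝ (Set.Ioi (1 : ℝ)) (fun u => Real.arcsin (1 / u)) :=
  convexOn_arcsin_one_div.subset Ioi_subset_Ici_self (convex_Ioi 1)
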